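/- arXiv:1306.0437 — 4 statements merged into one kernel-verified Lean document; each statement's English description precedes it below -/
import Mathlib

section
/- Let m ≤ m′ and r′ ≤ r be natural numbers with r − r′ = m′ − m. Let Q(i,a) (for i ∈ {0,…,m′−1}, a ∈ {1,…,r}) and P(b,j) (for b ∈ {1,…,r}, j ∈ {m,…,m′−1}) be real matrices satisfying: (i) Q(i,a) = 0 whenever m ≤ i ≤ m′−1 and 1 ≤ a ≤ r′; (ii) Σ_{a=1}^{r} Q(i,a)·P(a,j) = δ_{ij} for all i, j ∈ {m,…,m′−1}. Let A(0),…,A(m−1) and η(1),…,η(r) be arbitrary real numbers. Define Λ(b) = η(b) + Σ_{i=0}^{m−1} Q(i,b)·A(i) for b ∈ {1,…,r′}, and c(j,i) = −Σ_{a=1}^{r} Q(i,a)·P(a,j) for j ∈ {m,…,m′−1} and i ∈ {0,…,m−1}. Then for every a ∈ {r′+1,…,r} one has η(a) = −Σ_{i=0}^{m−1} Q(i,a)·A(i) + Σ_{j=m}^{m′−1} Q(j,a)·( −Σ_{b=1}^{r′} P(b,j)·Λ(b) + Σ_{b=1}^{r} P(b,j)·η(b) − Σ_{i=0}^{m−1}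 c(j,i)·A(i) ). -/
/-! The block of `Q` with rows `m ≤ j < m'` and columns `r' < a ≤ r` and the block of `P` with
rows `r' < a ≤ r` and columns `m ≤ j < m'` are square; by (i) and (ii) the first is a left
inverse of the second, hence also a right inverse. Writing `S b = ∑_{i<m} Q i b * A i`, the
bracket indexed by `j` collapses to `∑_{r' < b ≤ r} P b j * (η b + S b)`, and contracting it
against `Q j a` over `j` returns `η a + S a` by the right-inverse identity. -/

open Finset

theorem Finset.sum_Icc_succ_eq_add_sum_Icc_succ {M : Type*} [AddCommMonoid M] {a b c : ℕ}
    (hab : a ≤ b) (hbc : b ≤ c) (f : ℕ → M) :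
    ∑ x ∈ Icc (a + 1) c, f x = ∑ x ∈ Icc (a + 1) b, f x + ∑ x ∈ Icc (b + 1) c, f x := by
  simp only [Icc_add_one_left_eq_Ioc]
  exact (sum_Ioc_consecutive f hab hbc).symm

theorem Finset.sum_mul_eq_ite_comm_of_card_eq {ι κ R : Type*} [DecidableEq ι] [DecidableEq κ]
    [Semiring R] [IsStablyFiniteRing R] {s : Finset ι} {t : Finset κ} (hcard : #s = #t)
    {Q : ι → κ → R} {P : κ → ι → R}
    (hQP : ∀ i ∈ s, ∀ j ∈ s, ∑ a ∈ t, Q i a * P a j = if i = j then 1 else 0) :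
    ∀ a ∈ t, ∀ b ∈ t, ∑ j ∈ s, P b j * Q j a = if b = a then 1 else 0 := by
  let M : Matrix s t R := fun i a => Q i a
  let N : Matrix t s R := fun a j => P a j
  have hMN : M * N = 1 := by
    ext i j
    rw [Matrix.mul_apply, Matrix.one_apply, sum_coe_sort t (fun a => Q i a * P a j),
      hQP i i.2 j j.2]
    exact if_congr Subtype.ext_iff.symm rfl rfl
  have hNM : N * M = 1 := (Matrix.mul_eq_one_comm_of_card_eq s t R (by simpa using hcard)).mp hMN
  intro a ha b hb
  have hba := congrFun₂ hNM ⟨b, hb⟩ ⟨a, ha⟩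
  rw [Matrix.mul_apply, Matrix.one_apply, sum_coe_sort s (fun j => P b j * Q j a)] at hba
  rw [hba]
  exact if_congr Subtype.ext_iff rfl rfl

theorem Finset.sum_mul_sum_mul_eq_of_sum_mul_eq_ite {ι κ R : Type*} [DecidableEq κ]
    [CommSemiring R] {s : Finset ι} {t : Finset κ} {Q : ι → κ → R} {P : κ → ι → R} {a : κ}
    (ha : a ∈ t) (hPQ : ∀ b ∈ t, ∑ j ∈ s, P b j * Q j a = if b = a then 1 else 0)
    (x : κ → R) :
    ∑ j ∈ s, Q j a * ∑ b ∈ t, P b j * x b = x a := by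
  calc ∑ j ∈ s, Q j a * ∑ b ∈ t, P b j * x b
      = ∑ b ∈ t, (∑ j ∈ s, P b j * Q j a) * x b := by
        simp only [mul_sum, sum_mul]
        rw [sum_comm]
        exact sum_congr rfl fun b _ => sum_congr rfl fun j _ => by ring
    _ = ∑ b ∈ t, if b = a then x b else 0 :=
        sum_congr rfl fun b hb => by rw [hPQ b hb, ite_mul, one_mul, zero_mul]
    _ = x a := by rw [sum_ite_eq' t a x, if_pos ha]

theorem bracket_eq_sum_Icc_succ {r r' : ℕ} (hr : r' ≤ r) (I : Finset ℕ)
    (Q P : ℕ → ℕ → ℝ) (A η : ℕ → ℝ) (j : ℕ) :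
    -(∑ b ∈ Icc 1 r', P b j * (η b + ∑ i ∈ I, Q i b * A i))
        + (∑ b ∈ Icc 1 r, P b j * η b)
        - ∑ i ∈ I, (-(∑ c ∈ Icc 1 r, Q i c * P c j)) * A i
      = ∑ b ∈ Icc (r' + 1) r, P b j * (η b + ∑ i ∈ I, Q i b * A i) := by
  have hc : ∑ i ∈ I, (-(∑ c ∈ Icc 1 r, Q i c * P c j)) * A i
      = -∑ c ∈ Icc 1 r, P c j * ∑ i ∈ I, Q i c * A i := by
    simp only [neg_mul, sum_neg_distrib, sum_mul, mul_sum]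
    rw [sum_comm]
    exact congrArg _ (sum_congr rfl fun c _ => sum_congr rfl fun i _ => by ring)
  have hsplit := sum_Icc_succ_eq_add_sum_Icc_succ (Nat.zero_le r') hr
    (fun b => P b j * (η b + ∑ i ∈ I, Q i b * A i))
  simp only [zero_add, mul_add, sum_add_distrib] at hsplit
  simp only [hc, mul_add, sum_add_distrib]
  linarith

theorem syz_inverse_to_mirror_map_general
    (m m' r r' : ℕ) (hdim : r - r' = m' - m)
    (Q P : ℕ → ℕ → ℝ) (A η : ℕ → ℝ)
    (hQ0 : ∀ i a, m ≤ i → i < m' → 1 ≤ a → a ≤ r' → Q i a = 0)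
    (hQP : ∀ i j, m ≤ i → i < m' → m ≤ j → j < m' →
      (∑ a ∈ Finset.Icc 1 r, Q i a * P a j) = if i = j then (1 : ℝ) else 0) :
    ∀ a, r' + 1 ≤ a → a ≤ r →
      η a = -(∑ i ∈ Finset.range m, Q i a * A i)
        + ∑ j ∈ Finset.Ico m m', Q j a *
            (-(∑ b ∈ Finset.Icc 1 r',
                  P b j * (η b + ∑ i ∈ Finset.range m, Q i b * A i))
              + (∑ b ∈ Finset.Icc 1 r, P b j * η b)
              - ∑ i ∈ Finset.range m,
                  (-(∑ c ∈ Finset.Icc 1 r, Q i c * P c j)) * A i) := by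
  intro a ha₁ ha₂
  have hr : r' ≤ r := by omega
  have hblock : ∀ i ∈ Ico m m', ∀ j ∈ Ico m m',
      ∑ b ∈ Icc (r' + 1) r, Q i b * P b j = if i = j then 1 else 0 := by
    intro i hi j hj
    rw [mem_Ico] at hi hj
    have hzero : ∑ b ∈ Icc (0 + 1) r', Q i b * P b j = 0 :=
      sum_eq_zero fun b hb => by
        rw [mem_Icc] at hb
        rw [hQ0 i b hi.1 hi.2 hb.1 hb.2, zero_mul]
    rw [← hQP i j hi.1 hi.2 hj.1 hj.2, sum_Icc_succ_eq_add_sum_Icc_succ (Nat.zero_le r') hr,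
      hzero, zero_add]
  have hinv := sum_mul_eq_ite_comm_of_card_eq (by simp only [Nat.card_Ico, Nat.card_Icc]; omega)
    hblock a (mem_Icc.mpr ⟨ha₁, ha₂⟩)
  simp only [bracket_eq_sum_Icc_succ hr]
  rw [sum_mul_sum_mul_eq_of_sum_mul_eq_ite (mem_Icc.mpr ⟨ha₁, ha₂⟩) hinv]
  ring

/-- The linear-algebraic identity underlying the open mirror theorem:
with `η a = log y_a`, `Λ b = η b + ∑_{i<m} Q i b * A i` the toric mirror map,
and `c j i = -∑_{a=1}^r Q i a * P a j`, the SYZ map is inverse to the toric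
mirror map.  Here `Λ` and `c` are inlined in the conclusion. -/
theorem syz_inverse_to_mirror_map
    (m m' r r' : ℕ) (hm : m ≤ m') (hr : r' ≤ r) (hdim : r - r' = m' - m)
    (Q P : ℕ → ℕ → ℝ) (A η : ℕ → ℝ)
    (hQ0 : ∀ i a, m ≤ i → i < m' → 1 ≤ a → a ≤ r' → Q i a = 0)
    (hQP : ∀ i j, m ≤ i → i < m' → m ≤ j → j < m' →
      (∑ a ∈ Finset.Icc 1 r, Q i a * P a j) = if i = j then (1 : ℝ) else 0) :
    ∀ a, r' + 1 ≤ a → a ≤ r →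
      η a = -(∑ i ∈ Finset.range m, Q i a * A i)
        + ∑ j ∈ Finset.Ico m m', Q j a *
            (-(∑ b ∈ Finset.Icc 1 r',
                  P b j * (η b + ∑ i ∈ Finset.range m, Q i b * A i))
              + (∑ b ∈ Finset.Icc 1 r, P b j * η b)
              - ∑ i ∈ Finset.range m,
                  (-(∑ c ∈ Finset.Icc 1 r, Q i c * P c j)) * A i) :=
  syz_inverse_to_mirror_map_general m m' r r' hdim Q P A η hQ0 hQP
end

section
/- For every real number x with |x| < 1/4, the series Σ_{k=1}^{∞} ((2k−1)!/(k!)²) · x^k converges and its sum equals log 2 − log(1 + √(1−4x)); equivalently, the function k ↦ −((2k−1)!/(k!)²)·x^k (over k ≥ 1) has sum −log 2 + log(1 + √(1−4x)). -/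
/-!
Since `(2k-1)!/(k!)² = C(2k,k)/(2k)`, the series is the termwise antiderivative, vanishing at `0`,
of `∑_{k≥1} C(2k,k) x^(k-1)/2 = ((1-4x)^(-1/2) - 1)/(2x)`; here `∑ C(2k,k) xᵏ = (1-4x)^(-1/2)` is
the binomial series with exponent `-1/2`, because `C(2k,k)/4ᵏ` is the multichoose coefficient of
`1/2`. Rationalising, this derivative is `2/(√(1-4x)(1+√(1-4x)))`, which is also the derivative of
`log 2 - log(1+√(1-4x))`; both functions vanish at `0`, so they agree on `|x| < 1/4`.
-/

open Polynomial Real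

attribute [local instance] BinomialRing.toIsAddTorsionFree

theorem Ring.succ_nsmul_multichoose_succ {R : Type*} [Ring R] [BinomialRing R] [NatPowAssoc R]
    (r : R) (n : ℕ) :
    (n + 1) • Ring.multichoose r (n + 1) = Ring.multichoose r n * (r + n) := by
  apply nsmul_right_injective (Nat.factorial_ne_zero n)
  dsimp only
  rw [smul_smul, mul_comm, ← Nat.factorial_succ, Ring.factorial_nsmul_multichoose_eq_ascPochhammer,
    ← smul_mul_assoc, Ring.factorial_nsmul_multichoose_eq_ascPochhammer, ascPochhammer_succ_right,
    smeval_mul, smeval_add, smeval_X, smeval_natCast]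
  simp

theorem Ring.multichoose_one_half (n : ℕ) :
    Ring.multichoose (1 / 2 : ℝ) n = n.centralBinom / 4 ^ n := by
  induction n with
  | zero => simp
  | succ n ih =>
    have hrec := Ring.succ_nsmul_multichoose_succ (1 / 2 : ℝ) n
    have hcb : ((n + 1 : ℕ) : ℝ) * (n + 1).centralBinom = 2 * (2 * n + 1) * n.centralBinom := by
      exact_mod_cast Nat.succ_mul_centralBinom_succ n
    rw [nsmul_eq_mul, ih] at hrec
    push_cast at hrec hcb
    rw [eq_div_iff (by positivity)]
    apply mul_left_cancel₀ (show (n : ℝ) + 1 ≠ 0 by positivity)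
    rw [← mul_assoc, hrec, pow_succ]
    field_simp
    linear_combination (-2) * hcb

theorem hasSum_centralBinom_mul_pow {x : ℝ} (hx : |x| < 1 / 4) :
    HasSum (fun n ↦ (n.centralBinom : ℝ) * x ^ n) (√(1 - 4 * x))⁻¹ := by
  have h4x : 4 * x ∈ Metric.eball (0 : ℝ) 1 := by
    rw [← ENNReal.ofReal_one, Metric.eball_ofReal, mem_ball_zero_iff, norm_eq_abs, abs_mul]
    norm_num
    linarith
  have h := (one_div_one_sub_rpow_hasFPowerSeriesOnBall_zero (1 / 2)).hasSum h4x
  simp only [FormalMultilinearSeries.ofScalars_apply_eq, ← Ring.multichoose_eq,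
    Ring.multichoose_one_half, smul_eq_mul, mul_pow, zero_add, ← sqrt_eq_rpow] at h
  have hterm (n : ℕ) : (n.centralBinom : ℝ) / 4 ^ n * (4 ^ n * x ^ n) = n.centralBinom * x ^ n :=
    by field_simp
  simpa only [hterm, one_div] using h

theorem hasSum_centralBinom_succ_div_two_mul_pow {x : ℝ} (hx : |x| < 1 / 4) :
    HasSum (fun n ↦ ((n + 1).centralBinom : ℝ) / 2 * x ^ n)
      (2 / (√(1 - 4 * x) * (1 + √(1 - 4 * x)))) := by
  rcases eq_or_ne x 0 with rfl | hx0
  · convert hasSum_single (f := fun n ↦ ((n + 1).centralBinom : ℝ) / 2 * 0 ^ n) 0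
      (fun n hn ↦ by simp [hn]) using 1
    norm_num [Nat.centralBinom, Nat.choose]
  have hs : 0 < √(1 - 4 * x) := sqrt_pos.mpr (by linarith [abs_lt.mp hx])
  have hs2 : √(1 - 4 * x) ^ 2 = 1 - 4 * x := sq_sqrt (by linarith [abs_lt.mp hx])
  have h := ((hasSum_nat_add_iff' 1).mpr (hasSum_centralBinom_mul_pow hx)).div_const (2 * x)
  rw [Finset.sum_range_one, Nat.centralBinom_zero, pow_zero, Nat.cast_one, one_mul] at h
  have hsum : ((√(1 - 4 * x))⁻¹ - 1) / (2 * x) = 2 / (√(1 - 4 * x) * (1 + √(1 - 4 * x))) := by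
    field_simp
    linear_combination -hs2
  refine hsum ▸ h.congr_fun fun n ↦ ?_
  field_simp
  ring

theorem summable_div_succ_mul_pow_succ {𝕜 : Type*} [RCLike 𝕜] {b : ℕ → 𝕜} {C ρ : ℝ}
    (hb : ∀ n, ‖b n‖ * ρ ^ n ≤ C) {x : 𝕜} (hx : ‖x‖ < ρ) :
    Summable fun n : ℕ ↦ b n / (n + 1) * x ^ (n + 1) := by
  have hρ : 0 < ρ := (norm_nonneg x).trans_lt hx
  refine .of_norm_bounded ((summable_geometric_of_lt_one (by positivity)
    ((div_lt_one hρ).mpr hx)).mul_left (C * ‖x‖)) fun n ↦ ?_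
  have hn : 1 ≤ ‖(n : 𝕜) + 1‖ := by
    rw [← Nat.cast_add_one, RCLike.norm_natCast]; exact_mod_cast Nat.le_add_left 1 n
  calc ‖b n / (n + 1) * x ^ (n + 1)‖ ≤ ‖b n‖ * ‖x‖ ^ (n + 1) := by
        rw [norm_mul, norm_div, norm_pow]
        gcongr
        exact div_le_self (norm_nonneg _) hn
    _ = ‖b n‖ * ρ ^ n * ‖x‖ * (‖x‖ / ρ) ^ n := by rw [div_pow]; field_simp; ring
    _ ≤ C * ‖x‖ * (‖x‖ / ρ) ^ n := by gcongr; exact hb n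

theorem hasDerivAt_tsum_div_succ_mul_pow_succ {𝕜 : Type*} [RCLike 𝕜] {b : ℕ → 𝕜} {C ρ : ℝ}
    (hb : ∀ n, ‖b n‖ * ρ ^ n ≤ C) {x : 𝕜} (hx : ‖x‖ < ρ) :
    HasDerivAt (fun y ↦ ∑' n : ℕ, b n / (n + 1) * y ^ (n + 1)) (∑' n : ℕ, b n * x ^ n) x := by
  obtain ⟨r, hxr, hrρ⟩ := exists_between hx
  have hr : 0 < r := (norm_nonneg x).trans_lt hxr
  have hρ : 0 < ρ := hr.trans hrρ
  have hC : 0 ≤ C := (by positivity : 0 ≤ ‖b 0‖ * ρ ^ 0).trans (hb 0)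
  refine hasDerivAt_tsum_of_isPreconnected (g := fun n y ↦ b n / (n + 1) * y ^ (n + 1))
    (g' := fun n y ↦ b n * y ^ n)
    ((summable_geometric_of_lt_one (by positivity) ((div_lt_one hρ).mpr hrρ)).mul_left C)
    Metric.isOpen_ball (convex_ball (0 : 𝕜) r).isPreconnected (fun n y _ ↦ ?_) (fun n y hy ↦ ?_)
    (Metric.mem_ball_self hr) (by simp) (mem_ball_zero_iff.mpr hxr)
  · have h := (hasDerivAt_pow (n + 1) y).const_mul (b n / (n + 1))
    have hcoeff : b n / (n + 1) * ((n + 1 : ℕ) * y ^ (n + 1 - 1)) = b n * y ^ n := by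
      have := Nat.cast_add_one_ne_zero (R := 𝕜) n
      push_cast
      field_simp
    rwa [hcoeff] at h
  · rw [mem_ball_zero_iff] at hy
    calc ‖b n * y ^ n‖ = ‖b n‖ * ρ ^ n * (‖y‖ / ρ) ^ n := by
          rw [norm_mul, norm_pow, div_pow]; field_simp
      _ ≤ C * (r / ρ) ^ n := by gcongr; exact hb n

theorem norm_centralBinom_succ_div_two_mul_le (n : ℕ) :
    ‖((n + 1).centralBinom : ℝ) / 2‖ * (1 / 4) ^ n ≤ 2 := by
  have h := (Nat.cast_le (α := ℝ)).mpr (Nat.centralBinom_le_four_pow (n + 1))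
  rw [norm_of_nonneg (by positivity), div_pow, one_pow]
  push_cast at h
  rw [div_mul_div_comm, div_le_iff₀ (by positivity)]
  linarith [pow_succ (4 : ℝ) n]

theorem hasDerivAt_log_two_sub_log_one_add_sqrt {x : ℝ} (hx : x < 1 / 4) :
    HasDerivAt (fun y ↦ log 2 - log (1 + √(1 - 4 * y)))
      (2 / (√(1 - 4 * x) * (1 + √(1 - 4 * x)))) x := by
  have hpos : 0 < 1 - 4 * x := by linarith
  have hs : 0 < √(1 - 4 * x) := sqrt_pos.mpr hpos
  have h := ((((hasDerivAt_id' x).const_mul 4).const_sub 1).sqrt hpos.ne').const_add 1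
    |>.log (by positivity) |>.const_sub (log 2)
  refine h.congr_deriv ?_
  field_simp
  norm_num

theorem tsum_centralBinom_succ_div_two_div_succ_mul_pow_succ {x : ℝ} (hx : |x| < 1 / 4) :
    ∑' n : ℕ, ((n + 1).centralBinom : ℝ) / 2 / (n + 1) * x ^ (n + 1)
      = log 2 - log (1 + √(1 - 4 * x)) := by
  have hF (y) (hy : y ∈ Metric.ball (0 : ℝ) (1 / 4)) :
      HasDerivAt (fun y ↦ ∑' n : ℕ, ((n + 1).centralBinom : ℝ) / 2 / (n + 1) * y ^ (n + 1))
        (2 / (√(1 - 4 * y) * (1 + √(1 - 4 * y)))) y := by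
    rw [mem_ball_zero_iff, norm_eq_abs] at hy
    rw [← (hasSum_centralBinom_succ_div_two_mul_pow hy).tsum_eq]
    exact hasDerivAt_tsum_div_succ_mul_pow_succ norm_centralBinom_succ_div_two_mul_le hy
  have hG (y) (hy : y ∈ Metric.ball (0 : ℝ) (1 / 4)) :
      HasDerivAt (fun y ↦ log 2 - log (1 + √(1 - 4 * y)))
        (2 / (√(1 - 4 * y) * (1 + √(1 - 4 * y)))) y := by
    rw [mem_ball_zero_iff, norm_eq_abs] at hy
    exact hasDerivAt_log_two_sub_log_one_add_sqrt (abs_lt.mp hy).2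
  refine Metric.isOpen_ball.eqOn_of_deriv_eq (convex_ball 0 _).isPreconnected
    (fun y hy ↦ (hF y hy).differentiableAt.differentiableWithinAt)
    (fun y hy ↦ (hG y hy).differentiableAt.differentiableWithinAt)
    (fun y hy ↦ (hF y hy).deriv.trans (hG y hy).deriv.symm)
    (Metric.mem_ball_self (by norm_num)) (by norm_num) ?_
  rwa [mem_ball_zero_iff, norm_eq_abs]

theorem Nat.cast_factorial_two_mul_add_one_div_factorial_sq (n : ℕ) :
    ((2 * n + 1).factorial : ℝ) / ((n + 1).factorial : ℝ) ^ 2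
      = ((n + 1).centralBinom : ℝ) / 2 / (n + 1) := by
  have hcb : (n + 1).centralBinom * (n + 1).factorial * (n + 1).factorial
      = (2 * n + 1 + 1) * (2 * n + 1).factorial := by
    rw [Nat.centralBinom_eq_two_mul_choose, two_mul, Nat.add_choose_mul_factorial_mul_factorial,
      ← Nat.factorial_succ]
    ring_nf
  have hcb' : ((n + 1).centralBinom : ℝ) * (n + 1).factorial * (n + 1).factorial
      = (2 * n + 1 + 1) * (2 * n + 1).factorial := by exact_mod_cast hcb
  field_simp
  linear_combination -hcb'

/-- For `|x| < 1/4`, the series `∑_{k=1}^∞ ((2k-1)!/(k!)²) xᵏ` converges with sum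
`log 2 - log(1 + √(1-4x))`.  The sum over `k ≥ 1` is realized by reindexing
`k = j + 1` over all natural numbers `j`. -/
theorem mirror_map_series_KF2 (x : ℝ) (hx : |x| < 1 / 4) :
    HasSum
      (fun j : ℕ =>
        ((Nat.factorial (2 * (j + 1) - 1) : ℝ) /
            ((Nat.factorial (j + 1) : ℝ)) ^ 2) * x ^ (j + 1))
      (Real.log 2 - Real.log (1 + Real.sqrt (1 - 4 * x))) := by
  have hsum := (summable_div_succ_mul_pow_succ norm_centralBinom_succ_div_two_mul_le hx).hasSum
  rw [tsum_centralBinom_succ_div_two_div_succ_mul_pow_succ hx] at hsum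
  refine hsum.congr_fun fun j ↦ ?_
  rw [show 2 * (j + 1) - 1 = 2 * j + 1 by omega,
    Nat.cast_factorial_two_mul_add_one_div_factorial_sq]
end

section
/- Let n ≥ 2 be an integer and let e_1,…,e_{n−1} denote the standard basis of ℤ^{n−1}. Set b_i = (e_i, 1) ∈ ℤ^{n−1} × ℤ for i = 1,…,n−1 and b_n = (−e_1 − ⋯ − e_{n−1}, 1). Suppose t_1,…,t_n ∈ ℚ satisfy 0 ≤ t_i < 1 for all i, t_1 + ⋯ + t_n = 1, and Σ_{i=1}^n t_i·b_i ∈ ℤ^{n−1} × ℤ. Then t_i = 1/n for every i, and Σ_{i=1}^n t_i·b_i = (0, 1). -/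
/-!
The first coordinate of `∑ tᵢ bᵢ + s bₙ` at `j` is `tⱼ - s`. Two numbers in `[0, 1)` differing
by an integer are equal (they are their own fractional parts), so integrality forces every `tⱼ`
to equal `s`; then `∑ tᵢ + s = 1` reads `n s = 1`.
-/

open Finset

theorem eq_of_sub_eq_intCast {α : Type*} [Ring α] [LinearOrder α] [IsStrictOrderedRing α]
    [FloorRing α] {a b : α} (ha0 : 0 ≤ a) (ha1 : a < 1) (hb0 : 0 ≤ b) (hb1 : b < 1)
    (h : ∃ z : ℤ, a - b = z) : a = b := by
  rw [← Int.fract_eq_self.2 ⟨ha0, ha1⟩, ← Int.fract_eq_self.2 ⟨hb0, hb1⟩]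
  exact Int.fract_eq_fract.2 h

theorem sum_smul_single_add_smul_neg_sum_single {ι R : Type*} [Fintype ι] [DecidableEq ι]
    [Ring R] (t : ι → R) (s : R) :
    (∑ i, t i • ((Pi.single i 1 : ι → R), (1 : R)))
        + s • (-(∑ j, (Pi.single j 1 : ι → R)), (1 : R))
      = (fun j => t j - s, (∑ i, t i) + s) := by
  ext j
  · simp [Prod.fst_sum, Finset.sum_apply, Pi.single_apply, sub_eq_add_neg]
  · simp [Prod.snd_sum]

/-- The unique age-one Box element of `[ℂⁿ/ℤ_n]`: with
`b i = (e i, 1)` for `i = 1, …, n-1` (standard basis vectors `e i` of the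
first factor) and `b n = (-e 1 - ⋯ - e (n-1), 1)`, if rational coefficients
`t 1, …, t (n-1)` (here `t`) and `t n` (here `s`) lie in `[0,1)`, sum to `1`,
and the combination `∑ t i • b i + s • b n` is a lattice point, then all the
coefficients equal `1/n` and the combination equals `(0, 1)`. -/
theorem box_of_Cn_mod_Zn (n : ℕ) (hn : 2 ≤ n)
    (t : Fin (n - 1) → ℚ) (s : ℚ)
    (ht0 : ∀ i, 0 ≤ t i) (ht1 : ∀ i, t i < 1) (hs0 : 0 ≤ s) (hs1 : s < 1)
    (hsum : (∑ i, t i) + s = 1)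
    (hint : ∃ (w : Fin (n - 1) → ℤ) (z : ℤ),
      (∑ i, t i • ((Pi.single i 1 : Fin (n - 1) → ℚ), (1 : ℚ)))
          + s • (-(∑ j, (Pi.single j 1 : Fin (n - 1) → ℚ)), (1 : ℚ))
        = (fun j => (w j : ℚ), (z : ℚ))) :
    (∀ i, t i = 1 / (n : ℚ)) ∧ s = 1 / (n : ℚ) ∧
      (∑ i, t i • ((Pi.single i 1 : Fin (n - 1) → ℚ), (1 : ℚ)))
          + s • (-(∑ j, (Pi.single j 1 : Fin (n - 1) → ℚ)), (1 : ℚ))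
        = (0, 1) := by
  rw [sum_smul_single_add_smul_neg_sum_single] at hint ⊢
  obtain ⟨w, _, hw⟩ := hint
  have hts : ∀ i, t i = s := fun i =>
    eq_of_sub_eq_intCast (ht0 i) (ht1 i) hs0 hs1 ⟨w i, congrFun (Prod.mk.inj hw).1 i⟩
  have hs : s = 1 / n := by
    rw [sum_congr rfl fun i _ => hts i, sum_const, card_univ, Fintype.card_fin,
      nsmul_eq_mul, Nat.cast_sub (by omega), Nat.cast_one] at hsum
    exact eq_one_div_of_mul_eq_one_right (by linarith)
  refine ⟨fun i => (hts i).trans hs, hs, ?_⟩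
  rw [hsum]
  exact Prod.ext (funext fun j => sub_eq_zero.2 (hts j)) rfl
end

section
/- Let g ≥ 1 be an integer and let N ⊆ ℚ³ be the additive subgroup generated by ℤ³ together with the vector (1/(2g+1))·(1,1,2g−1). Then the set of v = (t_1,t_2,t_3) ∈ N with t_1,t_2,t_3 ∈ ℚ, 0 ≤ t_i < 1 for all i, and t_1 + t_2 + t_3 = 1, is exactly { (k/(2g+1), k/(2g+1), (2g+1−2k)/(2g+1)) : k ∈ ℤ, 1 ≤ k ≤ g }. -/
/-!
Every point of `N` is `z + m • w` with `z ∈ ℤ³` and `w = (1, 1, 2g - 1)/(2g + 1)`. If its first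
two coordinates lie in `[0, 1)`, both are the fractional part `r/(2g + 1)` of `m/(2g + 1)`, where
`r = m % (2g + 1)`. Age one then forces the third coordinate to be `1 - 2r/(2g + 1)`, and this
lies in `[0, 1)` exactly when `1 ≤ r ≤ g`.
-/

open AddSubgroup Set

theorem AddSubgroup.mem_closure_union_singleton_iff {G : Type*} [AddCommGroup G]
    (H : AddSubgroup G) (w v : G) :
    v ∈ closure ((H : Set G) ∪ {w}) ↔ ∃ m : ℤ, v - m • w ∈ H := by
  rw [closure_union, closure_eq, ← zmultiples_eq_closure, mem_sup]
  constructor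
  · rintro ⟨h, hh, _, ⟨m, rfl⟩, rfl⟩
    exact ⟨m, by simpa using hh⟩
  · rintro ⟨m, hm⟩
    exact ⟨_, hm, m • w, ⟨m, rfl⟩, sub_add_cancel v _⟩

def intPoints (R : Type*) [AddGroupWithOne R] : AddSubgroup (R × R × R) :=
  ((Int.castAddHom R).prodMap ((Int.castAddHom R).prodMap (Int.castAddHom R))).range

theorem coe_intPoints (R : Type*) [AddGroupWithOne R] : (intPoints R : Set (R × R × R)) =
    { x | ∃ z : ℤ × ℤ × ℤ, x = ((z.1 : R), (z.2.1 : R), (z.2.2 : R)) } := by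
  ext x
  rw [intPoints, AddMonoidHom.coe_range]
  constructor <;> rintro ⟨z, hz⟩ <;> exact ⟨z, hz.symm⟩

section LinearOrderedField

variable {K : Type*} [Field K] [LinearOrder K] [IsStrictOrderedRing K]

theorem intCast_div_mem_Ico_iff {k n : ℤ} (hn : 0 < n) :
    (k : K) / n ∈ Ico 0 1 ↔ 0 ≤ k ∧ k < n := by
  have hn' : (0 : K) < n := by exact_mod_cast hn
  rw [mem_Ico, div_nonneg_iff, div_lt_one hn']
  constructor
  · rintro ⟨h | h, hlt⟩
    · exact ⟨by exact_mod_cast h.1, by exact_mod_cast hlt⟩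
    · exact absurd h.2 (not_le.2 hn')
  · rintro ⟨h0, hlt⟩
    exact ⟨Or.inl ⟨by exact_mod_cast h0, hn'.le⟩, by exact_mod_cast hlt⟩

theorem eq_emod_div_of_sub_eq_intCast [FloorRing K] {t : K} {m a : ℤ} {n : ℕ}
    (h : t - m / n = a) (ht : t ∈ Ico 0 1) : t = ((m % n : ℤ) : K) / n := by
  rw [← Int.fract_div_intCast_eq_div_intCast_mod, eq_comm, Int.fract_eq_iff]
  exact ⟨ht.1, ht.2, -a, by push_cast; linarith⟩

end LinearOrderedField

def weightGenerator (g : ℕ) : ℚ × ℚ × ℚ :=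
  (1 / (2 * (g : ℚ) + 1), 1 / (2 * (g : ℚ) + 1), (2 * (g : ℚ) - 1) / (2 * (g : ℚ) + 1))

def ageOnePoint (g : ℕ) (k : ℤ) : ℚ × ℚ × ℚ :=
  ((k : ℚ) / (2 * (g : ℚ) + 1), (k : ℚ) / (2 * (g : ℚ) + 1),
    (2 * (g : ℚ) + 1 - 2 * (k : ℚ)) / (2 * (g : ℚ) + 1))

theorem ageOnePoint_sub_zsmul_mem_intPoints (g : ℕ) (k : ℤ) :
    ageOnePoint g k - k • weightGenerator g ∈ intPoints ℚ := by
  rw [← SetLike.mem_coe, coe_intPoints]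
  refine ⟨(0, 0, 1 - k), ?_⟩
  have hn : (2 * (g : ℚ) + 1) ≠ 0 := by positivity
  simp only [ageOnePoint, weightGenerator, Prod.smul_mk, Prod.mk_sub_mk, Prod.ext_iff]
  simp only [zsmul_eq_mul]
  push_cast
  refine ⟨?_, ?_, ?_⟩ <;> field_simp <;> ring

theorem exists_eq_ageOnePoint_of_mem_box {g : ℕ} {m : ℤ} {v : ℚ × ℚ × ℚ}
    (hm : v - m • weightGenerator g ∈ intPoints ℚ) (h1 : v.1 ∈ Ico 0 1) (h2 : v.2.1 ∈ Ico 0 1)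
    (h3 : v.2.2 ∈ Ico 0 1) (hsum : v.1 + v.2.1 + v.2.2 = 1) :
    ∃ k : ℤ, 1 ≤ k ∧ k ≤ g ∧ v = ageOnePoint g k := by
  rw [← SetLike.mem_coe, coe_intPoints] at hm
  obtain ⟨⟨a, b, c⟩, habc⟩ := hm
  simp only [weightGenerator, Prod.smul_mk, Prod.ext_iff, Prod.fst_sub, Prod.snd_sub,
    zsmul_eq_mul, mul_one_div] at habc
  have hn : ((2 * g + 1 : ℕ) : ℚ) = 2 * (g : ℚ) + 1 := by push_cast; ring
  set r : ℤ := m % (2 * g + 1 : ℕ)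
  have hv1 : v.1 = r / (2 * (g : ℚ) + 1) := by
    rw [← hn]; exact eq_emod_div_of_sub_eq_intCast (a := a) (by rw [hn]; exact habc.1) h1
  have hv2 : v.2.1 = r / (2 * (g : ℚ) + 1) := by
    rw [← hn]; exact eq_emod_div_of_sub_eq_intCast (a := b) (by rw [hn]; exact habc.2.1) h2
  have hv3 : v.2.2 = ((2 * g + 1 - 2 * r : ℤ) : ℚ) / (2 * (g : ℚ) + 1) := by
    have : (2 * (g : ℚ) + 1) ≠ 0 := by positivity
    rw [hv1, hv2] at hsum
    push_cast
    field_simp at hsum ⊢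
    linarith
  rw [hv3, show (2 * (g : ℚ) + 1) = ((2 * g + 1 : ℤ) : ℚ) by push_cast; ring,
    intCast_div_mem_Ico_iff (by omega)] at h3
  refine ⟨r, by omega, by omega, Prod.ext hv1 (Prod.ext hv2 ?_)⟩
  rw [hv3]
  push_cast
  rfl

theorem ageOnePoint_mem_box {g : ℕ} {k : ℤ} (hk1 : 1 ≤ k) (hkg : k ≤ g) :
    (ageOnePoint g k).1 ∈ Ico 0 1 ∧ (ageOnePoint g k).2.2 ∈ Ico 0 1 ∧
      (ageOnePoint g k).1 + (ageOnePoint g k).2.1 + (ageOnePoint g k).2.2 = 1 := by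
  have hn : (2 * (g : ℚ) + 1) = ((2 * g + 1 : ℤ) : ℚ) := by push_cast; ring
  have h3 : (ageOnePoint g k).2.2 = ((2 * g + 1 - 2 * k : ℤ) : ℚ) / (2 * g + 1) := by
    simp only [ageOnePoint]; push_cast; rfl
  refine ⟨?_, ?_, ?_⟩
  · rw [ageOnePoint, hn, intCast_div_mem_Ico_iff (by omega)]
    omega
  · rw [h3, hn, intCast_div_mem_Ico_iff (by omega)]
    omega
  · have : (2 * (g : ℚ) + 1) ≠ 0 := by positivity
    simp only [ageOnePoint]
    field_simp
    ring

theorem box_of_C3_mod_Z2g1_general (g : ℕ) :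
    { v : ℚ × ℚ × ℚ |
        v ∈ AddSubgroup.closure
          ({ x : ℚ × ℚ × ℚ |
              ∃ z : ℤ × ℤ × ℤ, x = ((z.1 : ℚ), (z.2.1 : ℚ), (z.2.2 : ℚ)) }
            ∪ {(1 / (2 * (g : ℚ) + 1), 1 / (2 * (g : ℚ) + 1),
                (2 * (g : ℚ) - 1) / (2 * (g : ℚ) + 1))})
        ∧ 0 ≤ v.1 ∧ v.1 < 1 ∧ 0 ≤ v.2.1 ∧ v.2.1 < 1 ∧ 0 ≤ v.2.2 ∧ v.2.2 < 1
        ∧ v.1 + v.2.1 + v.2.2 = 1 }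
    = { v : ℚ × ℚ × ℚ | ∃ k : ℤ, 1 ≤ k ∧ k ≤ (g : ℤ) ∧
        v = ((k : ℚ) / (2 * (g : ℚ) + 1), (k : ℚ) / (2 * (g : ℚ) + 1),
             (2 * (g : ℚ) + 1 - 2 * (k : ℚ)) / (2 * (g : ℚ) + 1)) } := by
  rw [← coe_intPoints]
  ext v
  simp only [mem_ofPred_eq, mem_closure_union_singleton_iff]
  constructor
  · rintro ⟨⟨m, hm⟩, h10, h11, h20, h21, h30, h31, hsum⟩
    exact exists_eq_ageOnePoint_of_mem_box hm ⟨h10, h11⟩ ⟨h20, h21⟩ ⟨h30, h31⟩ hsum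
  · rintro ⟨k, hk1, hkg, rfl⟩
    obtain ⟨⟨h10, h11⟩, ⟨h30, h31⟩, hsum⟩ := ageOnePoint_mem_box hk1 hkg
    exact ⟨⟨k, ageOnePoint_sub_zsmul_mem_intPoints g k⟩, h10, h11, h10, h11, h30, h31, hsum⟩

/-- The age-one Box elements of `[ℂ³/ℤ_{2g+1}]` (weights `(1,1,2g-1)`): in the
additive subgroup `N ⊆ ℚ³` generated by `ℤ³` together with
`(1,1,2g-1)/(2g+1)`, the points with all coordinates in `[0,1)` and coordinate
sum `1` are exactly `(k, k, 2g+1-2k)/(2g+1)` for `k = 1, …, g`. -/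
theorem box_of_C3_mod_Z2g1 (g : ℕ) (hg : 1 ≤ g) :
    { v : ℚ × ℚ × ℚ |
        v ∈ AddSubgroup.closure
          ({ x : ℚ × ℚ × ℚ |
              ∃ z : ℤ × ℤ × ℤ, x = ((z.1 : ℚ), (z.2.1 : ℚ), (z.2.2 : ℚ)) }
            ∪ {(1 / (2 * (g : ℚ) + 1), 1 / (2 * (g : ℚ) + 1),
                (2 * (g : ℚ) - 1) / (2 * (g : ℚ) + 1))})
        ∧ 0 ≤ v.1 ∧ v.1 < 1 ∧ 0 ≤ v.2.1 ∧ v.2.1 < 1 ∧ 0 ≤ v.2.2 ∧ v.2.2 < 1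
        ∧ v.1 + v.2.1 + v.2.2 = 1 }
    = { v : ℚ × ℚ × ℚ | ∃ k : ℤ, 1 ≤ k ∧ k ≤ (g : ℤ) ∧
        v = ((k : ℚ) / (2 * (g : ℚ) + 1), (k : ℚ) / (2 * (g : ℚ) + 1),
             (2 * (g : ℚ) + 1 - 2 * (k : ℚ)) / (2 * (g : ℚ) + 1)) } :=
  box_of_C3_mod_Z2g1_general g
end
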